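/- (Generalized Saito's criterion) Let (A, m) be a multiarrangement with |m| = ∑ m(H_i). If δ_1, ..., δ_l ∈ D(A, m) satisfy det(δ_i(x_j)) = c·Q(A, m) for some nonzero constant c ∈ K, then δ_1, ..., δ_l form a free S-basis of D(A, m). -/

import Mathlib

noncomputable section

variable {K : Type*} [Field K] {l n : ℕ}

/-- The linear form with coefficient vector `a`. -/
def lin (a : Fin l → K) : MvPolynomial (Fin l) K :=
  ∑ j, MvPolynomial.C (a j) * MvPolynomial.X j

/-- The polynomial vector field `δ = ∑_j f_j ∂_{x_j}` (given by its coefficient vector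
`f`) applied to a polynomial `g`. -/
def derApp (f : Fin l → MvPolynomial (Fin l) K) (g : MvPolynomial (Fin l) K) :
    MvPolynomial (Fin l) K :=
  ∑ j, f j * MvPolynomial.pderiv j g

/-- The vector field with coefficient vector `f` is logarithmic for the central
arrangement with defining linear forms `α_k`: `δ(α_k) ∈ (α_k) S` for all `k`. -/
def IsLogDer (α : Fin n → Fin l → K) (f : Fin l → MvPolynomial (Fin l) K) : Prop :=
  ∀ k, lin (α k) ∣ derApp f (lin (α k))

/-- The `α_k` are the defining forms of a central arrangement of `n` distinct
hyperplanes in `K^l`: they are nonzero and pairwise non-proportional. -/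
def IsArrangement (α : Fin n → Fin l → K) : Prop :=
  (∀ k, α k ≠ 0) ∧ ∀ k k', k ≠ k' → ∀ c : K, α k' ≠ c • α k
/-- The vector field with coefficient vector `f` is logarithmic for the multiarrangement
`(A, m)`: `δ(α_k) ∈ (α_k)^{m k} S` for all `k`. -/
def IsMultiLogDer (α : Fin n → Fin l → K) (m : Fin n → ℕ)
    (f : Fin l → MvPolynomial (Fin l) K) : Prop :=
  ∀ k, lin (α k) ^ m k ∣ derApp f (lin (α k))

/-
The defining forms `α_H` are prime in `S` and pairwise non-associate. If `θ_1, …, θ_l` are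
logarithmic, the vector `(θ_i(α_H))_i` is the matrix `(θ_i(x_j))` applied to the coefficient
vector of `α_H`; multiplying by the adjugate shows `α_H^{m(H)} ∣ det(θ_i(x_j))`, hence
`Q(A, m) ∣ det(θ_i(x_j))`. For `θ ∈ D(A, m)`, replacing one `δ_i` by `θ` therefore gives a
determinant divisible by `det(δ_i(x_j)) = c Q(A, m)`, so Cramer's rule expresses `θ` in the
`δ_i` with polynomial coefficients, uniquely since the determinant is nonzero.
-/

namespace Matrix

variable {R ι : Type*} [CommRing R] [Fintype ι] [DecidableEq ι]

theorem dvd_det_of_dvd_mulVec {M : Matrix ι ι R} {v : ι → R} {j : ι} (hv : IsUnit (v j))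
    {p : R} (h : ∀ i, p ∣ (M *ᵥ v) i) : p ∣ M.det := by
  have key : (M.adjugate *ᵥ (M *ᵥ v)) j = M.det * v j := by
    rw [mulVec_mulVec, adjugate_mul, smul_mulVec, one_mulVec, Pi.smul_apply, smul_eq_mul]
  rw [← hv.dvd_mul_right, ← key]
  exact Finset.dvd_sum fun i _ => dvd_mul_of_dvd_right (h i) _

theorem vecMul_adjugate_apply (D : Matrix ι ι R) (f : ι → R) (i : ι) :
    (f ᵥ* D.adjugate) i = (D.updateRow i f).det := by
  rw [← cramer_transpose_apply, cramer_eq_adjugate_mulVec, ← adjugate_transpose,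
    mulVec_transpose]

theorem existsUnique_vecMul_eq_of_det_dvd [IsDomain R] {D : Matrix ι ι R} (hD : D.det ≠ 0)
    {f : ι → R} (h : ∀ i, D.det ∣ (D.updateRow i f).det) : ∃! g, f = g ᵥ* D := by
  choose g hg using h
  have hfg : f ᵥ* D.adjugate = D.det • g := funext fun i => by
    rw [vecMul_adjugate_apply, hg, Pi.smul_apply, smul_eq_mul]
  have hgf : f = g ᵥ* D := smul_right_injective _ hD <| by
    calc D.det • f = f ᵥ* (D.adjugate * D) := by rw [adjugate_mul, vecMul_smul, vecMul_one]
      _ = D.det • (g ᵥ* D) := by rw [← vecMul_vecMul, hfg, smul_vecMul]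
  refine ⟨g, hgf, fun g' hg'f => sub_eq_zero.mp <| by_contra fun hne => hD ?_⟩
  exact exists_vecMul_eq_zero_iff.mp ⟨g' - g, hne, by rw [sub_vecMul, ← hg'f, ← hgf, sub_self]⟩

end Matrix

open MvPolynomial

theorem lin_eq_sumSMulX (a : Fin l → K) : lin a = sumSMulX (Finsupp.equivFunOnFinite.symm a) := by
  simp [lin, sumSMulX, Finsupp.linearCombination_apply, Finsupp.sum_fintype, smul_eq_C_mul]

theorem coeff_single_lin (a : Fin l → K) (j : Fin l) :
    (lin a).coeff (Finsupp.single j 1) = a j := by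
  simp [lin_eq_sumSMulX, coeff_sumSMulX]

theorem lin_injective : Function.Injective (lin : (Fin l → K) → MvPolynomial (Fin l) K) :=
  fun a b h => funext fun j => by rw [← coeff_single_lin a, h, coeff_single_lin]

theorem lin_smul (t : K) (a : Fin l → K) : lin (t • a) = C t * lin a := by
  simp [lin, Finset.mul_sum, mul_assoc]

theorem irreducible_lin {a : Fin l → K} (ha : a ≠ 0) : Irreducible (lin a) := by
  obtain ⟨j, hj⟩ := Function.ne_iff.mp ha
  rw [lin_eq_sumSMulX]
  refine irreducible_sumSMulX _ ⟨j, by simpa using hj⟩ fun r hr => ?_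
  exact (ne_zero_of_dvd_ne_zero hj (hr j)).isUnit

theorem not_lin_dvd_lin {a b : Fin l → K} (ha : a ≠ 0) (hb : ∀ t : K, b ≠ t • a) :
    ¬ lin a ∣ lin b := by
  intro hdvd
  have hb0 : b ≠ 0 := by simpa using hb 0
  obtain ⟨u, hu⟩ := (irreducible_lin ha).associated_of_dvd (irreducible_lin hb0) hdvd
  obtain ⟨t, -, ht⟩ := isUnit_iff_eq_C_of_isReduced.mp u.isUnit
  exact hb t <| lin_injective <| by rw [lin_smul, ← hu, ht, mul_comm]

theorem pderiv_lin (a : Fin l → K) (j : Fin l) : pderiv j (lin a) = C (a j) := by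
  simp [lin, pderiv_X, Pi.single_apply]

theorem derApp_lin (f : Fin l → MvPolynomial (Fin l) K) (a : Fin l → K) :
    derApp f (lin a) = ∑ j, f j * C (a j) := by
  simp only [derApp, pderiv_lin]

theorem dvd_det_of_dvd_derApp_lin {θ : Fin l → Fin l → MvPolynomial (Fin l) K} {a : Fin l → K}
    (ha : a ≠ 0) {p : MvPolynomial (Fin l) K} (h : ∀ i, p ∣ derApp (θ i) (lin a)) :
    p ∣ (Matrix.of θ).det := by
  obtain ⟨j, hj⟩ := Function.ne_iff.mp ha
  refine Matrix.dvd_det_of_dvd_mulVec (v := fun k => C (a k)) (hj.isUnit.map C) fun i => ?_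
  simpa only [derApp_lin, Matrix.mulVec, dotProduct, Matrix.of_apply] using h i

theorem prod_dvd_det_of_isMultiLogDer {α : Fin n → Fin l → K} (hα : IsArrangement α)
    {m : Fin n → ℕ} {θ : Fin l → Fin l → MvPolynomial (Fin l) K}
    (hθ : ∀ i, IsMultiLogDer α m (θ i)) : ∏ k, lin (α k) ^ m k ∣ (Matrix.of θ).det := by
  refine Fintype.prod_dvd_of_isRelPrime (fun k k' hne => ?_)
    fun k => dvd_det_of_dvd_derApp_lin (hα.1 k) fun i => hθ i k
  exact ((irreducible_lin (hα.1 k)).isRelPrime_iff_not_dvd.mpr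
    (not_lin_dvd_lin (hα.1 k) (hα.2 k k' hne))).pow

/-- Generalized Saito's criterion: if `δ_1, …, δ_l ∈ D(A, m)` satisfy
`det(δ_i(x_j)) = c · Q(A, m)` for a nonzero constant `c ∈ K`, then they form a free
`S`-basis of `D(A, m)`. -/
theorem multi_saito_criterion (α : Fin n → Fin l → K) (hα : IsArrangement α)
    (m : Fin n → ℕ)
    (δ : Fin l → Fin l → MvPolynomial (Fin l) K) (hδ : ∀ i, IsMultiLogDer α m (δ i))
    (c : K) (hc : c ≠ 0)
    (hdet : (Matrix.of δ).det = MvPolynomial.C c * ∏ k, lin (α k) ^ m k) :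
    ∀ f : Fin l → MvPolynomial (Fin l) K, IsMultiLogDer α m f →
      ∃! g : Fin l → MvPolynomial (Fin l) K, f = fun j => ∑ i, g i * δ i j := by
  intro f hf
  have hQ : ∏ k, lin (α k) ^ m k ≠ 0 :=
    Finset.prod_ne_zero_iff.mpr fun k _ => pow_ne_zero _ (irreducible_lin (hα.1 k)).ne_zero
  have hCc : IsUnit (C c : MvPolynomial (Fin l) K) := hc.isUnit.map C
  have hdet0 : (Matrix.of δ).det ≠ 0 := hdet ▸ mul_ne_zero hCc.ne_zero hQ
  refine Matrix.existsUnique_vecMul_eq_of_det_dvd hdet0 fun i => ?_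
  rw [hdet, hCc.mul_left_dvd]
  exact prod_dvd_det_of_isMultiLogDer hα (θ := Function.update δ i f)
    ((Function.forall_update_iff δ fun _ => IsMultiLogDer α m).mpr ⟨hf, fun i' _ => hδ i'⟩)

end
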